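/- Let 0 < φ < π/4 and let Γ be an interior segment barrier for the unit square U = [0,1]² (a segment barrier whose union is contained in U). Let X be the subfamily of segments making angle at most φ with the x-axis (|(b − a)₂| ≤ sin φ · ‖b − a‖), Y the subfamily of segments making angle at most φ with the y-axis (|(b − a)₁| ≤ sin φ · ‖b − a‖), and Z the remaining segments, with |X|, |Y|, |Z| the corresponding sums of segment lengths. Then (|X| + |Y|) · √2 · cos(π/4 − φ) + |Z| · √2 ≥ 2. -/

import Mathlib

open MeasureTheory Set

noncomputable section

/-- A point in the plane. -/
abbrev Pt : Type := EuclideanSpace ℝ (Fin 2)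

/-- A line in ℝ² is a set {p + t • v : t ∈ ℝ} for some p, v with v ≠ 0. -/
def IsLine (l : Set Pt) : Prop :=
  ∃ p v : Pt, v ≠ 0 ∧ l = {q : Pt | ∃ t : ℝ, q = p + t • v}

/-- Γ is a barrier (opaque set) for C if every line meeting C also meets Γ. -/
def IsBarrier (Γ C : Set Pt) : Prop :=
  ∀ l : Set Pt, IsLine l → (l ∩ C).Nonempty → (l ∩ Γ).Nonempty

/-- The closed unit square U = [0,1] × [0,1]. -/
def unitSquare : Set Pt := {p : Pt | p 0 ∈ Icc (0:ℝ) 1 ∧ p 1 ∈ Icc (0:ℝ) 1}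

/-- A segment [a, b] makes angle at most φ with the x-axis: |(b − a)₂| ≤ sin φ · ‖b − a‖. -/
def NearHorizontal (φ : ℝ) (a b : Pt) : Prop := |(b - a) 1| ≤ Real.sin φ * ‖b - a‖

/-- A segment [a, b] makes angle at most φ with the y-axis: |(b − a)₁| ≤ sin φ · ‖b − a‖. -/
def NearVertical (φ : ℝ) (a b : Pt) : Prop := |(b - a) 0| ≤ Real.sin φ * ‖b - a‖

/-!
Project onto the diagonal direction with `p ↦ p₀ + p₁`. Every line `x + y = t` with
`0 ≤ t ≤ 2` meets the square, hence the barrier, so the images of the segments cover `[0, 2]`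
and their lengths `|(b - a)₀ + (b - a)₁|` add up to at least `2`. The image of a segment of
length `ℓ` has length at most `√2 ℓ`, and at most `(sin φ + cos φ) ℓ = √2 cos (π / 4 - φ) ℓ`
when the segment is within `φ` of an axis.
-/

open Real

lemma abs_add_le_sqrt_two_mul {x y ℓ : ℝ} (h : x ^ 2 + y ^ 2 = ℓ ^ 2) (hℓ : 0 ≤ ℓ) :
    |x + y| ≤ √2 * ℓ :=
  abs_le_of_sq_le_sq (by rw [mul_pow, sq_sqrt zero_le_two]; nlinarith [sq_nonneg (x - y)])
    (by positivity)

lemma abs_add_le_add_mul_of_abs_le {x y ℓ s c : ℝ} (hsc : s ≤ c) (hs : s ^ 2 + c ^ 2 = 1)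
    (h : x ^ 2 + y ^ 2 = ℓ ^ 2) (hℓ : 0 ≤ ℓ) (hy : |y| ≤ s * ℓ) : |x + y| ≤ (s + c) * ℓ := by
  have hyc : |y| ≤ c * ℓ := hy.trans (mul_le_mul_of_nonneg_right hsc hℓ)
  -- `x ^ 2 ≤ ((s + c) * ℓ - |y|) ^ 2` reduces to `(s * ℓ - |y|) * (c * ℓ - |y|) ≥ 0`.
  have hx : |x| ≤ (s + c) * ℓ - |y| :=
    abs_le_of_sq_le_sq (by nlinarith [sq_abs y, mul_nonneg (sub_nonneg.2 hy) (sub_nonneg.2 hyc)])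
      (by nlinarith [abs_nonneg y])
  linarith [abs_add_le x y]

lemma sqrt_two_mul_cos_pi_div_four_sub (φ : ℝ) : √2 * cos (π / 4 - φ) = sin φ + cos φ := by
  rw [cos_sub, cos_pi_div_four, sin_pi_div_four]
  ring_nf
  rw [sq_sqrt zero_le_two]
  ring

lemma sin_le_cos_of_nonneg_of_le_pi_div_four {φ : ℝ} (hφ0 : 0 ≤ φ) (hφ1 : φ ≤ π / 4) :
    sin φ ≤ cos φ := by
  rw [← sin_pi_div_two_sub]
  exact sin_le_sin_of_le_of_le_pi_div_two (by linarith) (by linarith) (by linarith)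

lemma sub_le_tsum_of_Icc_subset_iUnion_uIcc {ι : Type*} [Countable ι] {a b : ℝ}
    {x y : ι → ℝ} (hcover : Icc a b ⊆ ⋃ i, uIcc (x i) (y i))
    (hsum : Summable fun i => |y i - x i|) : b - a ≤ ∑' i, |y i - x i| := by
  have : ENNReal.ofReal (b - a) ≤ ENNReal.ofReal (∑' i, |y i - x i|) :=
    calc ENNReal.ofReal (b - a) = volume (Icc a b) := Real.volume_Icc.symm
      _ ≤ ∑' i, volume (uIcc (x i) (y i)) := (measure_mono hcover).trans (measure_iUnion_le _)
      _ = ENNReal.ofReal (∑' i, |y i - x i|) := by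
        simp only [Real.volume_interval, ENNReal.ofReal_tsum_of_nonneg (fun _ => abs_nonneg _) hsum]
  exact (ENNReal.ofReal_le_ofReal_iff (tsum_nonneg fun _ => abs_nonneg _)).1 this

lemma hasSum_indicator_add_indicator_mul_add {ι : Type*} {f : ι → ℝ} (hf : Summable f)
    (X Y Z : Set ι) (α β : ℝ) :
    HasSum (fun i => (X.indicator f i + Y.indicator f i) * α + Z.indicator f i * β)
      ((∑' i : X, f i + ∑' i : Y, f i) * α + (∑' i : Z, f i) * β) := by
  simp only [tsum_subtype]
  exact (((hf.indicator X).hasSum.add (hf.indicator Y).hasSum).mul_right α).add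
    ((hf.indicator Z).hasSum.mul_right β)

lemma Pt.sq_add_sq (d : Pt) : d 0 ^ 2 + d 1 ^ 2 = ‖d‖ ^ 2 := by
  rw [EuclideanSpace.real_norm_sq_eq, Fin.sum_univ_two]

def coordSum : Pt →L[ℝ] ℝ := EuclideanSpace.proj 0 + EuclideanSpace.proj 1

@[simp]
lemma coordSum_apply (p : Pt) : coordSum p = p 0 + p 1 := rfl

lemma abs_coordSum_le (d : Pt) : |coordSum d| ≤ √2 * ‖d‖ :=
  abs_add_le_sqrt_two_mul (Pt.sq_add_sq d) (norm_nonneg d)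

lemma NearHorizontal.abs_coordSum_le {φ : ℝ} {a b : Pt} (h : NearHorizontal φ a b)
    (hφ : sin φ ≤ cos φ) : |coordSum (b - a)| ≤ (sin φ + cos φ) * ‖b - a‖ := by
  rw [coordSum_apply]
  exact abs_add_le_add_mul_of_abs_le hφ (sin_sq_add_cos_sq φ) (Pt.sq_add_sq _) (norm_nonneg _) h

lemma NearVertical.abs_coordSum_le {φ : ℝ} {a b : Pt} (h : NearVertical φ a b)
    (hφ : sin φ ≤ cos φ) : |coordSum (b - a)| ≤ (sin φ + cos φ) * ‖b - a‖ := by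
  rw [coordSum_apply, add_comm]
  exact abs_add_le_add_mul_of_abs_le hφ (sin_sq_add_cos_sq φ)
    (by rw [add_comm, Pt.sq_add_sq]) (norm_nonneg _) h

lemma abs_coordSum_sub_le_indicator {ι : Type*} {φ : ℝ} (hφ : sin φ ≤ cos φ) (a b : ι → Pt)
    (i : ι) :
    |coordSum (b i) - coordSum (a i)| ≤
      ({j | NearHorizontal φ (a j) (b j)}.indicator (fun j => ‖b j - a j‖) i +
          {j | NearVertical φ (a j) (b j)}.indicator (fun j => ‖b j - a j‖) i) *
          (sin φ + cos φ) +
        {j | ¬ NearHorizontal φ (a j) (b j) ∧ ¬ NearVertical φ (a j) (b j)}.indicator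
          (fun j => ‖b j - a j‖) i * √2 := by
  rw [← map_sub]
  have h0 := abs_nonneg (coordSum (b i - a i))
  by_cases hX : NearHorizontal φ (a i) (b i) <;> by_cases hY : NearVertical φ (a i) (b i) <;>
    simp only [mem_ofPred_eq, hX, hY, indicator_of_mem, indicator_of_notMem, not_true_eq_false,
      not_false_eq_true, and_self, and_true, and_false, zero_mul, add_zero, zero_add]
  · linarith [hX.abs_coordSum_le hφ]
  · linarith [hX.abs_coordSum_le hφ]
  · linarith [hY.abs_coordSum_le hφ]
  · linarith [abs_coordSum_le (b i - a i)]

lemma IsBarrier.Icc_subset_image_coordSum {Γ : Set Pt} (h : IsBarrier Γ unitSquare) :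
    Icc 0 2 ⊆ coordSum '' Γ := by
  intro t ht
  have hline : IsLine {q : Pt | ∃ s : ℝ, q = !₂[t / 2, t / 2] + s • !₂[1, -1]} :=
    ⟨_, _, fun h0 => by simpa using congrArg (· 0) h0, rfl⟩
  have hmeets : !₂[t / 2, t / 2] ∈ unitSquare := by
    constructor <;>
      simp only [Matrix.cons_val_zero, Matrix.cons_val_one, Matrix.cons_val_fin_one, mem_Icc] <;>
      constructor <;> linarith [ht.1, ht.2]
  obtain ⟨q, ⟨s, rfl⟩, hq⟩ := h _ hline ⟨_, ⟨0, by simp⟩, hmeets⟩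
  exact ⟨_, hq, by simp; ring⟩

lemma image_iUnion_segment {ι E : Type*} [AddCommGroup E] [Module ℝ E] (f : E →ₗ[ℝ] ℝ)
    (a b : ι → E) :
    f '' ⋃ i, segment ℝ (a i) (b i) = ⋃ i, uIcc (f (a i)) (f (b i)) := by
  simp only [image_iUnion, ← segment_eq_uIcc]
  exact iUnion_congr fun i => image_segment ℝ f.toAffineMap (a i) (b i)

theorem interior_barrier_xy_projection_inequality_general
    (φ : ℝ) (hφ0 : 0 < φ) (hφ1 : φ < Real.pi / 4)
    (a b : ℕ → Pt)
    (hbar : IsBarrier (⋃ i, segment ℝ (a i) (b i)) unitSquare)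
    (hsum : Summable fun i => ‖b i - a i‖) :
    2 ≤ ((∑' i : {j : ℕ // NearHorizontal φ (a j) (b j)}, ‖b i.1 - a i.1‖) +
          ∑' i : {j : ℕ // NearVertical φ (a j) (b j)}, ‖b i.1 - a i.1‖) *
            (Real.sqrt 2 * Real.cos (Real.pi / 4 - φ)) +
        (∑' i : {j : ℕ // ¬ NearHorizontal φ (a j) (b j) ∧ ¬ NearVertical φ (a j) (b j)},
          ‖b i.1 - a i.1‖) * Real.sqrt 2 := by
  have hcover : Icc 0 2 ⊆ ⋃ i, uIcc (coordSum (a i)) (coordSum (b i)) :=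
    image_iUnion_segment (coordSum : Pt →ₗ[ℝ] ℝ) a b ▸ hbar.Icc_subset_image_coordSum
  rw [sqrt_two_mul_cos_pi_div_four_sub]
  have hbound :=
    abs_coordSum_sub_le_indicator (sin_le_cos_of_nonneg_of_le_pi_div_four hφ0.le hφ1.le) a b
  have hweight := hasSum_indicator_add_indicator_mul_add hsum {j | NearHorizontal φ (a j) (b j)}
    {j | NearVertical φ (a j) (b j)}
    {j | ¬ NearHorizontal φ (a j) (b j) ∧ ¬ NearVertical φ (a j) (b j)}
    (sin φ + cos φ) √2
  have hproj : Summable fun i => |coordSum (b i) - coordSum (a i)| :=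
    .of_nonneg_of_le (fun _ => abs_nonneg _) hbound hweight.summable
  calc (2 : ℝ) = 2 - 0 := (sub_zero 2).symm
    _ ≤ ∑' i, |coordSum (b i) - coordSum (a i)| :=
      sub_le_tsum_of_Icc_subset_iUnion_uIcc hcover hproj
    _ ≤ _ := hproj.tsum_le_tsum hbound hweight.summable
    _ = _ := hweight.tsum_eq

/-- for an interior segment barrier of the unit square, partitioned into
near horizontal segments X, near vertical segments Y and remaining segments Z
(with respect to an angle 0 < φ < π/4), one has
(|X| + |Y|)·√2·cos(π/4 − φ) + |Z|·√2 ≥ 2. -/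
theorem interior_barrier_xy_projection_inequality
    (φ : ℝ) (hφ0 : 0 < φ) (hφ1 : φ < Real.pi / 4)
    (a b : ℕ → Pt) (hab : ∀ i, a i ≠ b i)
    (hbar : IsBarrier (⋃ i, segment ℝ (a i) (b i)) unitSquare)
    (hint : (⋃ i, segment ℝ (a i) (b i)) ⊆ unitSquare)
    (hsum : Summable fun i => ‖b i - a i‖) :
    2 ≤ ((∑' i : {j : ℕ // NearHorizontal φ (a j) (b j)}, ‖b i.1 - a i.1‖) +
          ∑' i : {j : ℕ // NearVertical φ (a j) (b j)}, ‖b i.1 - a i.1‖) *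
            (Real.sqrt 2 * Real.cos (Real.pi / 4 - φ)) +
        (∑' i : {j : ℕ // ¬ NearHorizontal φ (a j) (b j) ∧ ¬ NearVertical φ (a j) (b j)},
          ‖b i.1 - a i.1‖) * Real.sqrt 2 :=
  interior_barrier_xy_projection_inequality_general φ hφ0 hφ1 a b hbar hsum
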